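/- arXiv:2109.14591 — 2 statements merged into one kernel-verified Lean document; each statement's English description precedes it below -/
import Mathlib

section
/- Expected estimation error bound (Theorem 2): under the conditional independence assumption, E[η(X,Y)] ≤ ‖φ − φ̂‖₁ + MCE(m^θ), where η(x,y) = |p(h(x)|y)·p(y|m(x)) − m_y^θ(x)·φ̂_{h(x),y}|, ‖φ − φ̂‖₁ = ∑_{i,j} |φ_{ij} − φ̂_{ij}| is the entrywise L1 error of the confusion matrix estimate, and MCE(m^θ) = ∑_j P(Y=j) · E[ |P(Y=j | m(X)) − m_j^θ(X)| given Y=j ] is the ℓ1 marginal calibration error. -/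
open scoped Classical

/-- Probability of an event under weights `p` on a finite sample space. -/
noncomputable def Pr {Ω : Type*} [Fintype Ω] (p : Ω → ℝ) (A : Ω → Prop) : ℝ :=
  ∑ ω, if A ω then p ω else 0

/-- Theorem 2 (expected estimation error bound): under conditional independence
of `h(X)` and `m(X)` given `Y`,
`E[η(X,Y)] ≤ ‖φ − φ̂‖₁ + MCE(m^θ)`, where
`η(x,y) = |p(h(x)|y)·p(y|m(x)) − m_y^θ(x)·φ̂_{h(x),y}|`,
`‖φ − φ̂‖₁` is the entrywise L1 confusion-matrix error, and `MCE` is the ℓ1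
marginal calibration error. `V` is the (finite) set of values of `m(X)`,
`pcond j v = P(Y=j | m(X)=v)`, and `mθ v` is the calibrated output. -/
theorem expected_estimation_error_bound {K : ℕ} (hK : 1 ≤ K)
    {Ω V : Type*} [Fintype Ω] [Fintype V]
    (p : Ω → ℝ) (hp0 : ∀ ω, 0 ≤ p ω) (hp1 : ∑ ω, p ω = 1)
    (Y H : Ω → Fin K) (M : Ω → V)
    (mθ : V → Fin K → ℝ) (hmθ0 : ∀ v j, 0 ≤ mθ v j) (hmθ1 : ∀ v j, mθ v j ≤ 1)
    (hY : ∀ j, 0 < Pr p (fun ω => Y ω = j))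
    (hM : ∀ v, 0 < Pr p (fun ω => M ω = v))
    -- conditional independence of H and M given Y
    (hCI : ∀ (i : Fin K) (v : V) (j : Fin K),
      Pr p (fun ω => H ω = i ∧ M ω = v ∧ Y ω = j) * Pr p (fun ω => Y ω = j) =
        Pr p (fun ω => H ω = i ∧ Y ω = j) * Pr p (fun ω => M ω = v ∧ Y ω = j))
    -- the true human confusion matrix φ_{ij} = P(h(X)=i | Y=j)
    (φ : Fin K → Fin K → ℝ)
    (hφ : ∀ i j, φ i j =
      Pr p (fun ω => H ω = i ∧ Y ω = j) / Pr p (fun ω => Y ω = j))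
    -- an arbitrary estimate of the confusion matrix
    (φhat : Fin K → Fin K → ℝ)
    (hφhat0 : ∀ i j, 0 ≤ φhat i j) (hφhat1 : ∀ i j, φhat i j ≤ 1)
    -- p(y = j | m(X) = v)
    (pcond : Fin K → V → ℝ)
    (hpcond : ∀ j v, pcond j v =
      Pr p (fun ω => Y ω = j ∧ M ω = v) / Pr p (fun ω => M ω = v))
    -- the pointwise estimation error
    (η : Ω → ℝ)
    (hη : ∀ ω, η ω = |φ (H ω) (Y ω) * pcond (Y ω) (M ω) -
      mθ (M ω) (Y ω) * φhat (H ω) (Y ω)|)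
    -- the ℓ1 marginal calibration error
    (MCE : ℝ)
    (hMCE : MCE = ∑ j, Pr p (fun ω => Y ω = j) *
      ((∑ ω, if Y ω = j then p ω * |pcond j (M ω) - mθ (M ω) j| else 0) /
        Pr p (fun ω => Y ω = j))) :
    ∑ ω, p ω * η ω ≤ (∑ i, ∑ j, |φ i j - φhat i j|) + MCE := by

  have hPr_nonneg : ∀ (A : Ω → Prop), 0 ≤ Pr p A := by
    intro A
    apply Finset.sum_nonneg
    intro ω _
    split <;> simp [hp0 ω]
  have hPr_mono : ∀ (A B : Ω → Prop), (∀ ω, A ω → B ω) → Pr p A ≤ Pr p B := by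
    intro A B hAB
    apply Finset.sum_le_sum
    intro ω _
    by_cases hA : A ω
    · simp [hA, hAB ω hA]
    · simp only [hA, if_false]
      split <;> simp [hp0 ω]
  have hPr_le_one : ∀ (A : Ω → Prop), Pr p A ≤ 1 := by
    intro A
    calc Pr p A ≤ Pr p (fun _ => True) := hPr_mono _ _ (fun ω _ => trivial)
      _ = 1 := by simp [Pr, hp1]
  have hφ0 : ∀ i j, 0 ≤ φ i j := by
    intro i j; rw [hφ]; exact div_nonneg (hPr_nonneg _) (hPr_nonneg _)
  have hφ1 : ∀ i j, φ i j ≤ 1 := by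
    intro i j; rw [hφ, div_le_one (hY j)]
    exact hPr_mono _ _ (fun ω h => h.2)
  -- pointwise bound
  have key : ∀ ω, η ω ≤ |pcond (Y ω) (M ω) - mθ (M ω) (Y ω)| +
      |φ (H ω) (Y ω) - φhat (H ω) (Y ω)| := by
    intro ω
    rw [hη]
    set a := φ (H ω) (Y ω) with ha
    set b := mθ (M ω) (Y ω) with hb
    set c := pcond (Y ω) (M ω) with hc
    set d := φhat (H ω) (Y ω) with hd
    have h1 : a * c - b * d = a * (c - b) + b * (a - d) := by ring
    calc |a * c - b * d| = |a * (c - b) + b * (a - d)| := by rw [h1]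
      _ ≤ |a * (c - b)| + |b * (a - d)| := abs_add_le _ _
      _ = a * |c - b| + b * |a - d| := by
          rw [abs_mul, abs_mul, abs_of_nonneg (hφ0 _ _), abs_of_nonneg (hmθ0 _ _)]
      _ ≤ 1 * |c - b| + 1 * |a - d| := by
          gcongr
          · exact hφ1 _ _
          · exact hmθ1 _ _
      _ = |c - b| + |a - d| := by ring
  have step1 : ∑ ω, p ω * η ω ≤
      (∑ ω, p ω * |pcond (Y ω) (M ω) - mθ (M ω) (Y ω)|) +
      (∑ ω, p ω * |φ (H ω) (Y ω) - φhat (H ω) (Y ω)|) := by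
    rw [← Finset.sum_add_distrib]
    apply Finset.sum_le_sum
    intro ω _
    rw [← mul_add]
    exact mul_le_mul_of_nonneg_left (key ω) (hp0 ω)
  -- first sum equals MCE
  have hMCE' : MCE = ∑ ω, p ω * |pcond (Y ω) (M ω) - mθ (M ω) (Y ω)| := by
    rw [hMCE]
    have : ∀ j : Fin K, Pr p (fun ω => Y ω = j) *
        ((∑ ω, if Y ω = j then p ω * |pcond j (M ω) - mθ (M ω) j| else 0) /
          Pr p (fun ω => Y ω = j)) =
        ∑ ω, if Y ω = j then p ω * |pcond j (M ω) - mθ (M ω) j| else 0 := by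
      intro j
      rw [mul_div_cancel₀ _ (ne_of_gt (hY j))]
    simp only [this]
    rw [Finset.sum_comm]
    apply Finset.sum_congr rfl
    intro ω _
    simp [Finset.sum_ite_eq]
  -- second sum bound
  have step2 : ∑ ω, p ω * |φ (H ω) (Y ω) - φhat (H ω) (Y ω)| ≤
      ∑ i, ∑ j, |φ i j - φhat i j| := by
    have hpt : ∀ ω, p ω * |φ (H ω) (Y ω) - φhat (H ω) (Y ω)| =
        ∑ i, ∑ j, (if H ω = i ∧ Y ω = j then p ω else 0) * |φ i j - φhat i j| := by
      intro ω
      simp [ite_and, Finset.sum_ite_eq, ite_mul]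
    have heq : ∑ ω, p ω * |φ (H ω) (Y ω) - φhat (H ω) (Y ω)| =
        ∑ i, ∑ j, Pr p (fun ω => H ω = i ∧ Y ω = j) * |φ i j - φhat i j| := by
      calc ∑ ω, p ω * |φ (H ω) (Y ω) - φhat (H ω) (Y ω)|
          = ∑ ω, ∑ i, ∑ j, (if H ω = i ∧ Y ω = j then p ω else 0) * |φ i j - φhat i j| :=
            Finset.sum_congr rfl (fun ω _ => hpt ω)
        _ = ∑ i, ∑ ω, ∑ j, (if H ω = i ∧ Y ω = j then p ω else 0) * |φ i j - φhat i j| :=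
            Finset.sum_comm
        _ = ∑ i, ∑ j, ∑ ω, (if H ω = i ∧ Y ω = j then p ω else 0) * |φ i j - φhat i j| :=
            Finset.sum_congr rfl (fun i _ => Finset.sum_comm)
        _ = ∑ i, ∑ j, Pr p (fun ω => H ω = i ∧ Y ω = j) * |φ i j - φhat i j| := by
            simp [Pr, Finset.sum_mul]
    rw [heq]
    apply Finset.sum_le_sum
    intro i _
    apply Finset.sum_le_sum
    intro j _
    calc Pr p (fun ω => H ω = i ∧ Y ω = j) * |φ i j - φhat i j|
        ≤ 1 * |φ i j - φhat i j| :=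
          mul_le_mul_of_nonneg_right (hPr_le_one _) (abs_nonneg _)
      _ = |φ i j - φhat i j| := one_mul _
  calc ∑ ω, p ω * η ω ≤ _ := step1
    _ ≤ (∑ i, ∑ j, |φ i j - φhat i j|) + MCE := by
        rw [hMCE']
        linarith [step2]
end

section
/- Monotonicity of confidence ratios under tempering toward uniformity: for a probability vector m ∈ (0,1)^K with m_y > 1/K, the tempered true-class probability m_y^{1/T}/∑_k m_k^{1/T} is strictly decreasing in T on (0, ∞) whenever m is not uniform, hence the tempered confidence ratio r(T) = (m_y^{1/T}/∑_k m_k^{1/T}) / (1 − m_y^{1/T}/∑_k m_k^{1/T}) is strictly decreasing in T when m_y = max_k m_k and m is not uniform; moreover r(T) → ∞ as T → 0⁺ and r(T) → 1/(K−1) as T → ∞. -/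
/-! Dividing by `m y ^ (1 / T)` gives `f T = 1 / (1 + g T)` and `r T = 1 / g T` with
`g T = ∑_{k ≠ y} (m k / m y) ^ (1 / T)`, a sum of powers of bases in `(0, 1)`. So `g` increases
strictly in `T`, tends to `0` as `T → 0⁺` (the exponent blows up) and to `K - 1` as `T → ∞`
(the exponent vanishes). -/

open Filter Topology

section SumRpow

variable {ι : Type*} {s : Finset ι} {b : ι → ℝ}

theorem strictAnti_sum_rpow (hs : s.Nonempty) (hb0 : ∀ k ∈ s, 0 < b k) (hb1 : ∀ k ∈ s, b k < 1) :
    StrictAnti fun p : ℝ => ∑ k ∈ s, b k ^ p := fun _ _ hpq =>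
  Finset.sum_lt_sum_of_nonempty hs fun k hk =>
    Real.rpow_lt_rpow_of_exponent_gt (hb0 k hk) (hb1 k hk) hpq

theorem tendsto_sum_rpow_atTop (hb0 : ∀ k ∈ s, 0 ≤ b k) (hb1 : ∀ k ∈ s, b k < 1) :
    Tendsto (fun p : ℝ => ∑ k ∈ s, b k ^ p) atTop (𝓝 0) := by
  simpa using tendsto_finsetSum s fun k hk =>
    tendsto_rpow_atTop_of_base_lt_one (b k) (by linarith [hb0 k hk]) (hb1 k hk)

theorem tendsto_sum_rpow_zero (hb : ∀ k ∈ s, b k ≠ 0) :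
    Tendsto (fun p : ℝ => ∑ k ∈ s, b k ^ p) (𝓝 0) (𝓝 s.card) := by
  have hcont : Continuous fun p : ℝ => ∑ k ∈ s, b k ^ p :=
    continuous_finsetSum s fun k hk => Real.continuous_const_rpow (hb k hk)
  simpa using hcont.tendsto 0

end SumRpow

theorem rpow_div_sum_rpow_eq_inv_one_add {ι : Type*} [Fintype ι] [DecidableEq ι] {m : ι → ℝ}
    (hm : ∀ k, 0 < m k) (y : ι) (p : ℝ) :
    m y ^ p / ∑ k, m k ^ p = (1 + ∑ k ∈ Finset.univ.erase y, (m k / m y) ^ p)⁻¹ := by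
  have hy : 0 < m y ^ p := Real.rpow_pos_of_pos (hm y) p
  have hsum : ∑ k, m k ^ p = m y ^ p * (1 + ∑ k ∈ Finset.univ.erase y, (m k / m y) ^ p) := by
    rw [mul_add, mul_one, Finset.mul_sum, ← Finset.add_sum_erase _ _ (Finset.mem_univ y)]
    congr 1
    refine Finset.sum_congr rfl fun k _ => ?_
    rw [Real.div_rpow (hm k).le (hm y).le, mul_div_cancel₀ _ hy.ne']
  rw [hsum, div_mul_eq_div_div, div_self hy.ne', one_div]

theorem inv_div_one_sub_inv {K : Type*} [Field K] {a : K} (ha : a ≠ 0) :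
    a⁻¹ / (1 - a⁻¹) = (a - 1)⁻¹ := by
  rw [inv_eq_one_div, one_sub_div ha, div_div_div_cancel_right₀ ha, one_div]

theorem tempered_confidence_ratio_monotone_general {K : ℕ} (hK : 2 ≤ K)
    (m : Fin K → ℝ) (hm0 : ∀ k, 0 < m k)
    (y : Fin K) (hy : ∀ k, k ≠ y → m k < m y)
    (f r : ℝ → ℝ)
    (hf : ∀ T, f T = m y ^ (1 / T) / ∑ k, m k ^ (1 / T))
    (hr : ∀ T, r T = f T / (1 - f T)) :
    StrictAntiOn f (Set.Ioi 0) ∧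
    StrictAntiOn r (Set.Ioi 0) ∧
    Tendsto r (nhdsWithin 0 (Set.Ioi 0)) atTop ∧
    Tendsto r atTop (nhds (1 / ((K:ℝ) - 1))) := by
  set others := Finset.univ.erase y
  set g : ℝ → ℝ := fun p => ∑ k ∈ others, (m k / m y) ^ p
  have hcard : others.card = K - 1 := by simp [others]
  have hne : others.Nonempty := Finset.card_pos.mp (by omega)
  have hcard_real : (others.card : ℝ) = K - 1 := by
    rw [hcard, Nat.cast_sub (by omega), Nat.cast_one]
  have hb0 : ∀ k ∈ others, 0 < m k / m y := fun k _ => div_pos (hm0 k) (hm0 y)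
  have hb1 : ∀ k ∈ others, m k / m y < 1 := fun k hk =>
    (div_lt_one (hm0 y)).2 (hy k (Finset.ne_of_mem_erase hk))
  have hg_pos : ∀ p, 0 < g p := fun p =>
    Finset.sum_pos (fun k hk => Real.rpow_pos_of_pos (hb0 k hk) p) hne
  have hfg : ∀ T, f T = (1 + g (1 / T))⁻¹ := fun T => by
    rw [hf, rpow_div_sum_rpow_eq_inv_one_add hm0]
  have hrg : ∀ T, r T = (g (1 / T))⁻¹ := fun T => by
    rw [hr, hfg, inv_div_one_sub_inv (add_pos one_pos (hg_pos _)).ne', add_sub_cancel_left]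
  have hmono : StrictMonoOn (fun T => g (1 / T)) (Set.Ioi 0) := fun _ hT _ _ hlt =>
    strictAnti_sum_rpow hne hb0 hb1 (one_div_lt_one_div_of_lt hT hlt)
  refine ⟨fun T hT T' hT' hlt => ?_, fun T hT T' hT' hlt => ?_, ?_, ?_⟩
  · rw [hfg, hfg]
    exact inv_strictAnti₀ (add_pos one_pos (hg_pos _)) (by linarith [hmono hT hT' hlt])
  · rw [hrg, hrg]
    exact inv_strictAnti₀ (hg_pos _) (hmono hT hT' hlt)
  · have hg0 : Tendsto (fun T => g (1 / T)) (𝓝[>] 0) (𝓝[>] 0) :=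
      tendsto_nhdsWithin_of_tendsto_nhds_of_eventually_within _
        ((tendsto_sum_rpow_atTop (fun k hk => (hb0 k hk).le) hb1).comp
          (tendsto_inv_nhdsGT_zero.congr fun T => (one_div T).symm))
        (Eventually.of_forall fun T => hg_pos (1 / T))
    exact hg0.inv_tendsto_nhdsGT_zero.congr fun T => (hrg T).symm
  · have hgK : Tendsto (fun T => g (1 / T)) atTop (𝓝 (others.card : ℝ)) :=
      (tendsto_sum_rpow_zero fun k hk => (hb0 k hk).ne').comp
        (tendsto_inv_atTop_zero.congr fun T => (one_div T).symm)
    rw [one_div, ← hcard_real]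
    exact (hgK.inv₀ (Nat.cast_ne_zero.2 hne.card_pos.ne')).congr fun T => (hrg T).symm

/-- Monotonicity of the tempered true-class probability and confidence ratio. -/
theorem tempered_confidence_ratio_monotone {K : ℕ} (hK : 2 ≤ K)
    (m : Fin K → ℝ) (hm0 : ∀ k, 0 < m k) (hm1 : ∀ k, m k < 1)
    (hmsum : ∑ k, m k = 1)
    (y : Fin K) (hy : ∀ k, k ≠ y → m k < m y) (hy' : 1 / (K:ℝ) < m y)
    (hnonunif : m ≠ fun _ => 1 / (K:ℝ))
    (f r : ℝ → ℝ)
    (hf : ∀ T, f T = m y ^ (1 / T) / ∑ k, m k ^ (1 / T))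
    (hr : ∀ T, r T = f T / (1 - f T)) :
    StrictAntiOn f (Set.Ioi 0) ∧
    StrictAntiOn r (Set.Ioi 0) ∧
    Tendsto r (nhdsWithin 0 (Set.Ioi 0)) atTop ∧
    Tendsto r atTop (nhds (1 / ((K:ℝ) - 1))) :=
  tempered_confidence_ratio_monotone_general hK m hm0 y hy f r hf hr
end
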